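/- arXiv:1009.5740 — 3 statements merged into one kernel-verified Lean document; each statement's English description precedes it below -/
import Mathlib

section
/- Let π ∈ S_n be a separable permutation. The map φ : Λ_π × V_π → S_n defined by φ(u, v) = u⁻¹v, for u ≤ π and v ≥ π in weak order, is a bijection. -/
/-!
Record inversions on values: `inversions u` is the set of pairs of values `a < b` that `u`
puts in the wrong order. Then `u ≤ v` in the right weak order iff
`inversions u ⊆ inversions v`, so with `K = inversions π` the map `(u, v) ↦ u⁻¹ v` is a
bijection iff every `w` has exactly one `u` with `inversions u ⊆ K ⊆ inversions (u w)`.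

For separable `π` the values split into a lower and an upper block with either no pair of `K`
across them (`π` is a direct sum) or every such pair (a skew sum). This is proved by adding the
values one at a time, largest last: the patterns 2413 and 3142 are exactly what could stop a
split from extending. In the direct case every admissible `u` maps the first positions onto
the lower block, so the problem for `w` splits into the same problem on each block, solved by
induction. Reversing positions complements inversion sets and exchanges the roles of `u` and
`u w`, which turns a skew sum into a direct sum.
-/

open Polynomial

namespace SepPerm

/-- The length (number of inversions) of a permutation of `Fin n`. -/
def invCount {n : ℕ} (π : Equiv.Perm (Fin n)) : ℕ :=
  (Finset.univ.filter fun p : Fin n × Fin n => p.1 < p.2 ∧ π p.2 < π p.1).card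

/-- The (right) weak Bruhat order: `u ≤ v` iff `ℓ(u) + ℓ(u⁻¹v) = ℓ(v)`. -/
def wle {n : ℕ} (u v : Equiv.Perm (Fin n)) : Prop :=
  invCount u + invCount (u⁻¹ * v) = invCount v

open scoped Classical in
/-- `F(Λ_π, q) = ∑_{u ≤ π} q^{ℓ(u)}`, rank generating function of `[id, π]`. -/
noncomputable def FLam {n : ℕ} (π : Equiv.Perm (Fin n)) : Polynomial ℤ :=
  ∑ u ∈ Finset.univ.filter (fun u => wle u π), X ^ invCount u

open scoped Classical in
/-- `F(V_π, q) = ∑_{v ≥ π} q^{ℓ(v) - ℓ(π)}`, rank generating function of `[π, w₀]`. -/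
noncomputable def FV {n : ℕ} (π : Equiv.Perm (Fin n)) : Polynomial ℤ :=
  ∑ v ∈ Finset.univ.filter (fun v => wle π v), X ^ (invCount v - invCount π)

/-- A permutation is separable iff it avoids the patterns 3142 and 2413. -/
def IsSeparable {n : ℕ} (π : Equiv.Perm (Fin n)) : Prop :=
  (¬ ∃ i j k h : Fin n, i < j ∧ j < k ∧ k < h ∧
      π j < π h ∧ π h < π i ∧ π i < π k) ∧
  (¬ ∃ i j k h : Fin n, i < j ∧ j < k ∧ k < h ∧
      π k < π i ∧ π i < π h ∧ π h < π j)

/-- The longest element `w₀ = n, n-1, …, 1`. -/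
def w0 (n : ℕ) : Equiv.Perm (Fin n) := Fin.revPerm

/-- The complement `π^c`, with `π^c(i) = n + 1 - π(i)` (one-indexed). -/
def compl {n : ℕ} (π : Equiv.Perm (Fin n)) : Equiv.Perm (Fin n) := w0 n * π

/-- `[k] = 1 + q + ⋯ + q^{k-1}`. -/
noncomputable def qnum (k : ℕ) : Polynomial ℤ := ∑ i ∈ Finset.range k, X ^ i

/-- `[N]! = [1][2]⋯[N]`. -/
noncomputable def qfact (N : ℕ) : Polynomial ℤ := ∏ k ∈ Finset.range N, qnum (k + 1)

/-- The inversion poset `P_π` on the letters: `x ≤_P y` iff `x ≤ y` and `π⁻¹x ≤ π⁻¹y`. -/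
def invLe {n : ℕ} (π : Equiv.Perm (Fin n)) (x y : Fin n) : Prop :=
  x ≤ y ∧ π⁻¹ x ≤ π⁻¹ y

/-- `σ` is a linear extension of the order `r`: whenever `i <_r j`, `i` precedes `j`
in the one-line notation of `σ` (i.e. the position `σ⁻¹ i` comes before `σ⁻¹ j`). -/
def IsLinExt {N : ℕ} (r : Fin N → Fin N → Prop) (σ : Equiv.Perm (Fin N)) : Prop :=
  ∀ i j, r i j → i ≠ j → σ.symm i < σ.symm j

open scoped Classical in
/-- `F(𝓛(P), q) = ∑_{σ ∈ 𝓛(P)} q^{ℓ(σ)}`, generating function of linear extensions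
by number of inversions. -/
noncomputable def FLin {N : ℕ} (r : Fin N → Fin N → Prop) : Polynomial ℤ :=
  ∑ σ ∈ Finset.univ.filter (fun σ => IsLinExt r σ), X ^ invCount σ


section General

open scoped symmDiff

theorem nonempty_orderIso_of_equiv {α β : Type*} [LinearOrder α] [LinearOrder β] [Finite α]
    (e : α ≃ β) : Nonempty (α ≃o β) := by
  have := Fintype.ofFinite α
  have := Fintype.ofEquiv α e
  exact ⟨(Fintype.orderIsoFinOfCardEq α rfl).symm.trans
    (Fintype.orderIsoFinOfCardEq β (Fintype.card_congr e).symm)⟩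

theorem IsLowerSet.eq_of_ncard_eq {α : Type*} [LinearOrder α] [Finite α] {s t : Set α}
    (hs : IsLowerSet s) (ht : IsLowerSet t) (h : s.ncard = t.ncard) : s = t := by
  rcases hs.total ht with hst | hts
  · exact Set.eq_of_subset_of_ncard_le hst h.ge
  · exact (Set.eq_of_subset_of_ncard_le hts h.le).symm

theorem le_iff_subrel_le_of_cross {β : Type*} {L K : β → β → Prop} (p : β → Prop)
    (hcross : ∀ a b, (p a ↔ ¬p b) → L a b → K a b) :
    L ≤ K ↔ Subrel L p ≤ Subrel K p ∧ Subrel L (¬p ·) ≤ Subrel K (¬p ·) := by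
  refine ⟨fun h => ⟨fun a b => h a b, fun a b => h a b⟩, fun ⟨h₁, h₂⟩ a b hab => ?_⟩
  by_cases ha : p a <;> by_cases hb : p b
  · exact h₁ ⟨a, ha⟩ ⟨b, hb⟩ hab
  · exact hcross a b (iff_of_true ha hb) hab
  · exact hcross a b (iff_of_false ha (not_not.2 hb)) hab
  · exact h₂ ⟨a, ha⟩ ⟨b, hb⟩ hab

section SumComplCongr

variable {α β : Type*} {q : α → Prop} {p : β → Prop} [DecidablePred q] [DecidablePred p]

def sumComplCongr (e₁ : {x // q x} ≃ {y // p y}) (e₂ : {x // ¬q x} ≃ {y // ¬p y}) : α ≃ β :=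
  (Equiv.sumCompl q).symm.trans ((e₁.sumCongr e₂).trans (Equiv.sumCompl p))

variable (e₁ : {x // q x} ≃ {y // p y}) (e₂ : {x // ¬q x} ≃ {y // ¬p y})

theorem sumComplCongr_mem_iff (x : α) : q x ↔ p (sumComplCongr e₁ e₂ x) := by
  by_cases hx : q x
  · simpa [sumComplCongr, hx] using (e₁ ⟨x, hx⟩).2
  · simpa [sumComplCongr, hx] using (e₂ ⟨x, hx⟩).2

theorem sumComplCongr_subtypeEquiv :
    (sumComplCongr e₁ e₂).subtypeEquiv (sumComplCongr_mem_iff e₁ e₂) = e₁ := by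
  ext ⟨x, hx⟩
  simp [sumComplCongr, hx]

theorem sumComplCongr_subtypeEquiv_not :
    (sumComplCongr e₁ e₂).subtypeEquiv (fun x => not_congr (sumComplCongr_mem_iff e₁ e₂ x)) =
      e₂ := by
  ext ⟨x, hx⟩
  simp [sumComplCongr, hx]

end SumComplCongr

theorem Equiv.eq_of_subtypeEquiv_eq {α β : Type*} {q : α → Prop} {p : β → Prop} {u u' : α ≃ β}
    (hu : ∀ x, q x ↔ p (u x)) (hu' : ∀ x, q x ↔ p (u' x))
    (h₁ : u.subtypeEquiv hu = u'.subtypeEquiv hu')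
    (h₂ : (u.subtypeEquiv fun x => not_congr (hu x) : {x // ¬q x} ≃ {y // ¬p y}) =
      u'.subtypeEquiv fun x => not_congr (hu' x)) :
    u = u' := by
  ext x
  by_cases hx : q x
  · exact congrArg Subtype.val (Equiv.congr_fun h₁ ⟨x, hx⟩)
  · exact congrArg Subtype.val (Equiv.congr_fun h₂ ⟨x, hx⟩)

theorem card_add_card_symmDiff_eq_iff {α : Type*} [DecidableEq α] {s t : Finset α} :
    s.card + (s ∆ t).card = t.card ↔ s ⊆ t := by
  have hst := Finset.card_sdiff_add_card_inter s t
  have hts := Finset.card_sdiff_add_card_inter t s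
  have hsymm : (s ∆ t).card = (s \ t).card + (t \ s).card := by
    rw [symmDiff_def, Finset.sup_eq_union, Finset.card_union_of_disjoint disjoint_sdiff_sdiff]
  rw [Finset.inter_comm] at hts
  rw [← Finset.sdiff_eq_empty_iff_subset, ← Finset.card_eq_zero]
  omega

theorem bijective_inv_mul_of_existsUnique {G : Type*} [Group G] {P Q : G → Prop}
    (h : ∀ w, ∃! u, P u ∧ Q (u * w)) :
    Function.Bijective fun p : {u // P u} × {v // Q v} => p.1.val⁻¹ * p.2.val := by
  refine ⟨?_, fun w => ?_⟩
  · rintro ⟨⟨u, hu⟩, ⟨v, hv⟩⟩ ⟨⟨u', hu'⟩, ⟨v', hv'⟩⟩ (huv : u⁻¹ * v = u'⁻¹ * v')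
    obtain rfl : u = u' := (h (u⁻¹ * v)).unique ⟨hu, by simpa⟩ ⟨hu', by simpa [huv]⟩
    obtain rfl : v = v' := mul_left_cancel huv
    rfl
  · obtain ⟨u, ⟨hu, hv⟩, -⟩ := h w
    exact ⟨(⟨u, hu⟩, ⟨u * w, hv⟩), by simp⟩

end General

section InversionSets

variable {α β : Type*} [LinearOrder α] [LinearOrder β]

def inversions (u : α ≃ β) (a b : β) : Prop :=
  a < b ∧ u.symm b < u.symm a

def invCompl (K : β → β → Prop) (a b : β) : Prop :=
  a < b ∧ ¬K a b

theorem inversions_toEquiv_le (e : α ≃o β) (K : β → β → Prop) : inversions e.toEquiv ≤ K :=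
  fun _ _ h => absurd h.2 (not_lt.2 (e.symm.monotone h.1.le))

theorem inversions_ofDual_trans (u : α ≃ β) :
    inversions (OrderDual.ofDual.trans u) = invCompl (inversions u) := by
  ext a b
  simp only [inversions, invCompl, Equiv.symm_trans_apply, OrderDual.ofDual_symm_eq,
    OrderDual.toDual_lt_toDual, not_and, not_lt]
  exact and_congr_right fun hab =>
    ⟨fun h _ => h.le, fun h => (h hab).lt_of_ne (u.symm.injective.ne hab.ne)⟩

theorem invCompl_le_invCompl_iff {K L : β → β → Prop} (hK : K ≤ (· < ·)) :
    invCompl L ≤ invCompl K ↔ K ≤ L := by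
  refine ⟨fun h a b hab => ?_, fun h a b hab => ⟨hab.1, fun hK' => hab.2 (h a b hK')⟩⟩
  by_contra hL
  exact (h a b ⟨hK a b hab, hL⟩).2 hab

/-- `lt`, `trans` and `between` characterise the inversion sets of permutations of a finite
chain; the last two fields exclude the patterns 3142 and 2413, read off on values. -/
structure IsSeparableInvSet (K : β → β → Prop) : Prop where
  lt : ∀ ⦃a b⦄, K a b → a < b
  trans : ∀ ⦃a b c⦄, K a b → K b c → K a c
  between : ∀ ⦃a b c⦄, a < b → b < c → K a c → K a b ∨ K b c
  not_3142 : ∀ ⦃a b c d⦄, a < b → b < c → c < d →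
    K a c → K b c → K b d → ¬K a b → ¬K a d → ¬K c d → False
  not_2413 : ∀ ⦃a b c d⦄, a < b → b < c → c < d →
    K a b → K a d → K c d → ¬K a c → ¬K b c → ¬K b d → False

namespace IsSeparableInvSet

variable {K : β → β → Prop}

theorem le_lt (hK : IsSeparableInvSet K) : K ≤ (· < ·) := fun _ _ h => hK.lt h

theorem compl (hK : IsSeparableInvSet K) : IsSeparableInvSet (invCompl K) where
  lt _ _ h := h.1
  trans a b c hab hbc := ⟨hab.1.trans hbc.1, fun hac =>
    (hK.between hab.1 hbc.1 hac).elim hab.2 hbc.2⟩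
  between a b c hab hbc hac := by
    by_contra h
    simp only [invCompl, hab, hbc, true_and, not_or, not_not] at h
    exact hac.2 (hK.trans h.1 h.2)
  not_3142 a b c d hab hbc hcd hac hbc' hbd nab nad ncd := by
    simp only [invCompl, not_and, not_not] at *
    exact hK.not_2413 hab hbc hcd (nab hab) (nad (hab.trans (hbc.trans hcd))) (ncd hcd)
      hac.2 hbc'.2 hbd.2
  not_2413 a b c d hab hbc hcd hab' had hcd' nac nbc nbd := by
    simp only [invCompl, not_and, not_not] at *
    exact hK.not_3142 hab hbc hcd (nac (hab.trans hbc)) (nbc hbc) (nbd (hbc.trans hcd))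
      hab'.2 had.2 hcd'.2

theorem subrel (hK : IsSeparableInvSet K) (p : β → Prop) : IsSeparableInvSet (Subrel K p) where
  lt _ _ h := hK.lt h
  trans a b c := hK.trans (a := a.1) (b := b.1) (c := c.1)
  between a b c := hK.between (a := a.1) (b := b.1) (c := c.1)
  not_3142 a b c d := hK.not_3142 (a := a.1) (b := b.1) (c := c.1) (d := d.1)
  not_2413 a b c d := hK.not_2413 (a := a.1) (b := b.1) (c := c.1) (d := d.1)

end IsSeparableInvSet

end InversionSets

section SumCuts

open Finset

variable {β : Type*} [LinearOrder β] {K : β → β → Prop}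

/-- On `s`, `K` is a direct sum with lower block `B`; for `invCompl K` this is a skew sum. -/
def IsSumCut (K : β → β → Prop) (s B : Finset β) : Prop :=
  B ⊆ s ∧ B.Nonempty ∧ (s \ B).Nonempty ∧ ∀ x ∈ B, ∀ y ∈ s \ B, x < y ∧ ¬K x y

theorem isSumCut_insert_self {s : Finset β} {t : β} (hst : ∀ x ∈ s, x < t) (hs : s.Nonempty)
    (hK : ∀ x ∈ s, ¬K x t) : IsSumCut K (insert t s) s := by
  have ht : t ∉ s := fun h => (hst t h).false
  refine ⟨subset_insert t s, hs, ⟨t, by simp [ht]⟩, fun x hx y hy => ?_⟩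
  simp only [mem_sdiff, mem_insert] at hy
  obtain rfl := hy.1.resolve_right hy.2
  exact ⟨hst x hx, hK x hx⟩

theorem IsSeparableInvSet.isSumCut_insert (hK : IsSeparableInvSet K) {s B : Finset β} {t e : β}
    (hst : ∀ x ∈ s, x < t) (hB : IsSumCut K s B) (he : e ∈ s) (het : ¬K e t) :
    ∃ B', IsSumCut K (insert t s) B' := by
  classical
  obtain ⟨hBs, ⟨b, hb⟩, ⟨c, hc⟩, hcut⟩ := hB
  have ht : t ∉ s := fun h => (hst t h).false
  have upper : ∀ x ∈ B, K x t → ∀ y ∈ s \ B, K y t := fun x hx hxt y hy =>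
    (hK.between (hcut x hx y hy).1 (hst y (mem_sdiff.1 hy).1) hxt).resolve_left
      (hcut x hx y hy).2
  refine ⟨B.filter (¬K · t), (filter_subset _ _).trans (hBs.trans (subset_insert t s)), ?_,
    ⟨t, by simp [show t ∉ B from fun h => ht (hBs h)]⟩, ?_⟩
  · by_contra hne
    simp only [not_nonempty_iff_eq_empty, filter_eq_empty_iff, not_not] at hne
    by_cases heB : e ∈ B
    · exact het (hne heB)
    · exact het (upper b hb (hne hb) e (mem_sdiff.2 ⟨he, heB⟩))
  intro x hx y hy
  obtain ⟨hxB, hxt⟩ := mem_filter.1 hx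
  simp only [mem_sdiff, mem_insert, mem_filter, not_and, not_not] at hy
  obtain ⟨rfl | hys, hy⟩ := hy
  · exact ⟨hst x (hBs hxB), hxt⟩
  by_cases hyB : y ∈ B
  · have hyt := hy hyB
    have hxy : x < y := by
      refine lt_of_le_of_ne (not_lt.1 fun hyx => ?_) (by rintro rfl; exact hxt hyt)
      have hyx' := (hK.between hyx (hst x (hBs hxB)) hyt).resolve_right hxt
      have hcs := mem_sdiff.1 hc
      -- `y < x < c < t` would form the pattern 2413
      exact hK.not_2413 hyx (hcut x hxB c hc).1 (hst c hcs.1) hyx' hyt (upper y hyB hyt c hc)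
        (hcut y hyB c hc).2 (hcut x hxB c hc).2 hxt
    exact ⟨hxy, fun hxy' => hxt (hK.trans hxy' hyt)⟩
  · exact hcut x hxB y (mem_sdiff.2 ⟨hys, hyB⟩)

theorem IsSeparableInvSet.exists_isSumCut (hK : IsSeparableInvSet K) {s : Finset β}
    (hs : 2 ≤ #s) : ∃ B, IsSumCut K s B ∨ IsSumCut (invCompl K) s B := by
  induction s using Finset.induction_on_max generalizing K with
  | empty => simp at hs
  | insert t s hst ih =>
    have ht : t ∉ s := fun h => (hst t h).false
    rw [card_insert_of_notMem ht] at hs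
    have hsne : s.Nonempty := card_pos.1 (by omega)
    by_cases hnone : ∀ x ∈ s, ¬K x t
    · exact ⟨s, .inl (isSumCut_insert_self hst hsne hnone)⟩
    by_cases hall : ∀ x ∈ s, ¬invCompl K x t
    · exact ⟨s, .inr (isSumCut_insert_self hst hsne hall)⟩
    push Not at hnone hall
    obtain ⟨d, hd, hdt⟩ := hnone
    obtain ⟨e, he, het⟩ := hall
    have hde : d ≠ e := by rintro rfl; exact het.2 hdt
    have hs2 : 2 ≤ #s := by
      simpa [hde] using card_le_card (insert_subset hd (singleton_subset_iff.2 he))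
    obtain ⟨B, hB | hB⟩ := ih hK hs2
    · exact (hK.isSumCut_insert hst hB he fun h => het.2 h).imp fun _ => .inl
    · exact (hK.compl.isSumCut_insert hst hB hd fun h => h.2 hdt).imp fun _ => .inr

end SumCuts

section Factorization

universe u

variable {β : Type u} [LinearOrder β]

/-- `u ∈ Λ` and `u w ∈ V` (note that `w.trans u` is `u ∘ w`). -/
def IsFactorization {α α' : Type*} [LinearOrder α] [LinearOrder α'] (K : β → β → Prop)
    (w : α ≃ α') (u : α' ≃ β) : Prop :=
  inversions u ≤ K ∧ K ≤ inversions (w.trans u)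

/-- Positions `α`, `α'` are kept apart from the values `β` so that the property restricts to
blocks of values. -/
def HasUniqueFactorization (K : β → β → Prop) : Prop :=
  ∀ ⦃α α' : Type u⦄ [LinearOrder α] [LinearOrder α'] (w : α ≃ α'), Nonempty (α' ≃ β) →
    ∃! u : α' ≃ β, IsFactorization K w u

section Blocks

variable {α α' : Type*} [LinearOrder α] [LinearOrder α'] {K : β → β → Prop} {p : β → Prop}

theorem isLowerSet_setOf_of_inversions_le (hcut : ∀ x y, p x → ¬p y → x < y ∧ ¬K x y)
    {u : α' ≃ β} (hu : inversions u ≤ K) : IsLowerSet {x | p (u x)} := by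
  intro x y hyx hx
  by_contra hy
  obtain ⟨hlt, hnK⟩ := hcut _ _ hx hy
  exact hnK (hu _ _ ⟨hlt, by simpa using hyx.lt_of_ne (by rintro rfl; exact hy hx)⟩)

theorem mem_iff_of_inversions_le [Finite α'] (hcut : ∀ x y, p x → ¬p y → x < y ∧ ¬K x y)
    (e : α' ≃o β) {u : α' ≃ β} (hu : inversions u ≤ K) (x : α') : p (e x) ↔ p (u x) := by
  have hcard : ∀ u : α' ≃ β, {x | p (u x)}.ncard = {y | p y}.ncard := fun u =>
    Set.ncard_congr' (u.subtypeEquiv fun _ => Iff.rfl)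
  have hlowe := isLowerSet_setOf_of_inversions_le hcut (inversions_toEquiv_le e K)
  have hlowu := isLowerSet_setOf_of_inversions_le hcut hu
  exact Set.ext_iff.1
    (IsLowerSet.eq_of_ncard_eq hlowe hlowu ((hcard e.toEquiv).trans (hcard u).symm)) x

theorem isFactorization_iff_of_sumCut {q : α' → Prop} (hK : K ≤ (· < ·))
    (hcut : ∀ x y, p x → ¬p y → x < y ∧ ¬K x y) (hq : IsLowerSet {x | q x}) (w : α ≃ α')
    {u : α' ≃ β} (hu : ∀ x, q x ↔ p (u x)) :
    IsFactorization K w u ↔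
      IsFactorization (Subrel K p) (w.subtypeEquiv (p := fun x => q (w x)) fun _ => Iff.rfl)
        (u.subtypeEquiv hu) ∧
      IsFactorization (Subrel K (¬p ·)) (w.subtypeEquiv (p := fun x => ¬q (w x)) (q := (¬q ·))
        fun _ => Iff.rfl) (u.subtypeEquiv fun x => not_congr (hu x)) := by
  have hcross : ∀ a b, (p a ↔ ¬p b) → a < b → p a ∧ ¬p b := fun a b hab hlt => by
    by_cases ha : p a
    · exact ⟨ha, hab.1 ha⟩
    · exact absurd hlt (hcut b a (not_not.1 (mt hab.2 ha)) ha).1.asymm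
  unfold IsFactorization
  rw [le_iff_subrel_le_of_cross p, le_iff_subrel_le_of_cross p]
  · exact and_and_and_comm
  · intro a b hab hKab
    obtain ⟨ha, hb⟩ := hcross a b hab (hK a b hKab)
    exact absurd hKab (hcut a b ha hb).2
  · intro a b hab hinv
    obtain ⟨ha, hb⟩ := hcross a b hab hinv.1
    have hqa : q (u.symm a) := (hu _).2 (by simpa using ha)
    exact (hb (by simpa using (hu _).1 (hq hinv.2.le hqa))).elim

end Blocks

namespace HasUniqueFactorization

variable {K : β → β → Prop}

theorem of_subsingleton [Subsingleton β] (hK : K ≤ (· < ·)) : HasUniqueFactorization K := by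
  intro α α' _ _ w ⟨e₀⟩
  have : Subsingleton α' := e₀.subsingleton
  have hlt : ∀ a b : β, ¬a < b := fun a b h => h.ne (Subsingleton.elim a b)
  exact ⟨e₀, ⟨fun a b h => (hlt a b h.1).elim, fun a b h => (hlt a b (hK a b h)).elim⟩,
    fun u _ => Subsingleton.elim u e₀⟩

theorem of_invCompl (hK : K ≤ (· < ·)) (h : HasUniqueFactorization (invCompl K)) :
    HasUniqueFactorization K := by
  intro α α' _ _ w ⟨e₀⟩
  -- Reversing positions complements inversion sets and swaps `u` with `w.trans u`.
  let E : (α' ≃ β) ≃ (αᵒᵈ ≃ β) := (w.symm.trans OrderDual.toDual).equivCongr (Equiv.refl β)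
  refine (E.existsUnique_congr fun u => ?_).2
    (h (OrderDual.ofDual.trans (w.symm.trans OrderDual.toDual)) ⟨E e₀⟩)
  have hE : E u = OrderDual.ofDual.trans (w.trans u) := rfl
  have hwE : (OrderDual.ofDual.trans (w.symm.trans OrderDual.toDual)).trans (E u) =
      OrderDual.ofDual.trans u := by
    ext
    simp [hE]
  rw [IsFactorization, IsFactorization, hwE, hE, inversions_ofDual_trans, inversions_ofDual_trans,
    invCompl_le_invCompl_iff hK, invCompl_le_invCompl_iff fun _ _ h => h.1, and_comm]

theorem of_sumCut [Finite β] {p : β → Prop} (hK : K ≤ (· < ·))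
    (hcut : ∀ x y, p x → ¬p y → x < y ∧ ¬K x y)
    (h₁ : HasUniqueFactorization (Subrel K p)) (h₂ : HasUniqueFactorization (Subrel K (¬p ·))) :
    HasUniqueFactorization K := by
  classical
  intro α α' _ _ w ⟨e₀⟩
  have : Finite α' := .of_equiv β e₀.symm
  obtain ⟨e⟩ := nonempty_orderIso_of_equiv e₀
  have hq : IsLowerSet {x | p (e x)} :=
    isLowerSet_setOf_of_inversions_le hcut (inversions_toEquiv_le e K)
  obtain ⟨u₁, hu₁, huniq₁⟩ := h₁ (w.subtypeEquiv (p := fun x => p (e (w x))) fun _ => Iff.rfl)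
    ⟨e.toEquiv.subtypeEquiv fun _ => Iff.rfl⟩
  obtain ⟨u₂, hu₂, huniq₂⟩ := h₂
    (w.subtypeEquiv (p := fun x => ¬p (e (w x))) (q := fun x => ¬p (e x)) fun _ => Iff.rfl)
    ⟨e.toEquiv.subtypeEquiv fun _ => Iff.rfl⟩
  refine ⟨sumComplCongr u₁ u₂, ?_, fun u hu => ?_⟩
  · show IsFactorization K w _
    rw [isFactorization_iff_of_sumCut hK hcut hq w (sumComplCongr_mem_iff u₁ u₂),
      sumComplCongr_subtypeEquiv, sumComplCongr_subtypeEquiv_not]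
    exact ⟨hu₁, hu₂⟩
  · have hb := mem_iff_of_inversions_le hcut e hu.1
    obtain ⟨hv₁, hv₂⟩ := (isFactorization_iff_of_sumCut hK hcut hq w hb).1 hu
    exact Equiv.eq_of_subtypeEquiv_eq hb (sumComplCongr_mem_iff u₁ u₂)
      ((huniq₁ _ hv₁).trans (sumComplCongr_subtypeEquiv u₁ u₂).symm)
      ((huniq₂ _ hv₂).trans (sumComplCongr_subtypeEquiv_not u₁ u₂).symm)

end HasUniqueFactorization

theorem IsSeparableInvSet.hasUniqueFactorization [Fintype β] {K : β → β → Prop}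
    (hK : IsSeparableInvSet K) : HasUniqueFactorization K := by
  induction hn : Fintype.card β using Nat.strong_induction_on generalizing β with
  | _ n ih =>
  classical
  by_cases hβ : Fintype.card β ≤ 1
  · have := Fintype.card_le_one_iff_subsingleton.1 hβ
    exact .of_subsingleton hK.le_lt
  have ofCut : ∀ {K' : β → β → Prop}, IsSeparableInvSet K' → ∀ {B},
      IsSumCut K' Finset.univ B → HasUniqueFactorization K' := by
    rintro K' hK' B ⟨-, ⟨b, hb⟩, ⟨c, hc⟩, hcut⟩
    refine .of_sumCut hK'.le_lt (p := (· ∈ B)) (fun x y hx hy => hcut x hx y (by simpa using hy))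
      (ih _ ?_ (hK'.subrel _) rfl) (ih _ ?_ (hK'.subrel _) rfl)
    · exact hn ▸ Fintype.card_subtype_lt (x := c) (by simpa using hc)
    · exact hn ▸ Fintype.card_subtype_lt (x := b) (by simpa using hb)
  obtain ⟨B, hB | hB⟩ := hK.exists_isSumCut (s := Finset.univ) (by rw [Finset.card_univ]; omega)
  · exact ofCut hK hB
  · exact .of_invCompl hK.le_lt (ofCut hK.compl hB)

end Factorization

section Permutations

open Finset
open scoped symmDiff

variable {n : ℕ}

open scoped Classical in
noncomputable def inversionSet (σ : Equiv.Perm (Fin n)) : Finset (Fin n × Fin n) :=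
  univ.filter fun q => inversions σ q.1 q.2

theorem mem_inversionSet {σ : Equiv.Perm (Fin n)} {q : Fin n × Fin n} :
    q ∈ inversionSet σ ↔ inversions σ q.1 q.2 := by
  simp [inversionSet]

theorem invCount_inv_mul (u v : Equiv.Perm (Fin n)) :
    invCount (u⁻¹ * v) = #(inversionSet u ∆ inversionSet v) := by
  unfold invCount
  -- positions `i < j` inverted by `u⁻¹ * v` go to the values `v i`, `v j`, sorted
  refine card_bij' (fun q _ => if v q.1 < v q.2 then (v q.1, v q.2) else (v q.2, v q.1))
    (fun q _ => if v⁻¹ q.1 < v⁻¹ q.2 then (v⁻¹ q.1, v⁻¹ q.2) else (v⁻¹ q.2, v⁻¹ q.1))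
    ?_ ?_ ?_ ?_ <;>
  · rintro ⟨i, j⟩ h
    simp only [inversionSet, mem_symmDiff, inversions, Equiv.Perm.mul_apply,
      Equiv.Perm.inv_def] at h ⊢
    split_ifs <;> grind [Equiv.apply_symm_apply, Equiv.symm_apply_apply]

theorem wle_iff_inversions_le (u v : Equiv.Perm (Fin n)) :
    wle u v ↔ inversions u ≤ inversions v := by
  have hcount : ∀ σ : Equiv.Perm (Fin n), invCount σ = #(inversionSet σ) := fun σ => by
    have hone : inversionSet (1 : Equiv.Perm (Fin n)) = ∅ :=
      eq_empty_of_forall_notMem fun _ hq =>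
        (mem_inversionSet.1 hq).1.asymm (mem_inversionSet.1 hq).2
    simpa [hone, ← bot_eq_empty, bot_symmDiff] using invCount_inv_mul 1 σ
  rw [wle, invCount_inv_mul, hcount, hcount, card_add_card_symmDiff_eq_iff]
  simp [subset_iff, inversionSet, Pi.le_def]

theorem IsSeparable.isSeparableInvSet {π : Equiv.Perm (Fin n)} (hπ : IsSeparable π) :
    IsSeparableInvSet (inversions π) := by
  have hpos : ∀ a b, a < b → ¬inversions π a b → π.symm a < π.symm b := fun a b hab h =>
    (not_lt.1 fun h' => h ⟨hab, h'⟩).lt_of_ne (π.symm.injective.ne hab.ne)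
  refine ⟨fun _ _ h => h.1, fun _ _ _ h₁ h₂ => ⟨h₁.1.trans h₂.1, h₂.2.trans h₁.2⟩, ?_, ?_, ?_⟩
  · intro a b c hab hbc hac
    by_cases hba : π.symm b < π.symm a
    · exact .inl ⟨hab, hba⟩
    · exact .inr ⟨hbc, hac.2.trans_le (not_lt.1 hba)⟩
  · intro a b c d hab hbc hcd hac _ hbd _ nad _
    exact hπ.1 ⟨π.symm c, π.symm a, π.symm d, π.symm b, hac.2,
      hpos a d (hab.trans (hbc.trans hcd)) nad, hbd.2, by simpa using ⟨hab, hbc, hcd⟩⟩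
  · intro a b c d hab hbc hcd _ had _ nac _ nbd
    exact hπ.2 ⟨π.symm b, π.symm d, π.symm a, π.symm c, hpos b d (hbc.trans hcd) nbd,
      had.2, hpos a c (hab.trans hbc) nac, by simpa using ⟨hab, hbc, hcd⟩⟩

end Permutations

/-- For separable `π ∈ S_n`, the map
`φ : Λ_π × V_π → S_n`, `φ(u, v) = u⁻¹v`, is a bijection. -/
theorem bijective_inv_mul (n : ℕ) (π : Equiv.Perm (Fin n)) (hsep : IsSeparable π) :
    Function.Bijective
      (fun p : {u : Equiv.Perm (Fin n) // wle u π} × {v : Equiv.Perm (Fin n) // wle π v} =>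
        (p.1.val)⁻¹ * p.2.val) := by
  refine bijective_inv_mul_of_existsUnique fun w => ?_
  simpa only [wle_iff_inversions_le, Equiv.Perm.mul_def, IsFactorization] using
    hsep.isSeparableInvSet.hasUniqueFactorization (w : Fin n ≃ Fin n) ⟨Equiv.refl _⟩

end SepPerm
end

section
/- Let n > 1 and let π ∈ S_n be a separable permutation. Then the inversion poset P_π decomposes as P_π = P₁ + P₂ (disjoint union) or P_π = P₁ ⊕ P₂ (ordinal sum) for two nonempty induced subposets P₁, P₂ on complementary subsets of {1,…,n}. -/
/-!
Every separable permutation of length at least two is a direct or a skew sum: some proper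
prefix of positions carries either the smallest or the largest values. This holds for every
suffix window, by prepending one position `s` at a time to a window already split as a lower
block `B` followed by the rest `R`: either the value at `s` exceeds everything in `R`, and `s`
alone is an upper block, or it lies below everything from the first larger value in `R` on (a
smaller value there would form 3142 with `s` and the first position of `B`), which closes a lower
block starting at `s`. The skew case
is the same argument for the reversed value order. A direct-sum prefix makes `P_π` an ordinal sum,
a skew-sum prefix a disjoint union.
-/

open Polynomial

namespace SepPerm

open Function OrderDual

section Blocks

variable {α : Type*} [LinearOrder α] {n : ℕ}

def HasPattern3142 (f : Fin n → α) : Prop :=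
  ∃ i j k h : Fin n, i < j ∧ j < k ∧ k < h ∧ f j < f h ∧ f h < f i ∧ f i < f k

/-- For `toDual ∘ f` this says that the block `[s, t)` lies above the rest (a skew sum). -/
def BlockBelow (f : Fin n → α) (s t : ℕ) : Prop :=
  ∀ i j : Fin n, s ≤ (i : ℕ) → (i : ℕ) < t → t ≤ (j : ℕ) → f i < f j

variable {f : Fin n → α}

theorem blockBelow_penultimate {s : ℕ} (hs : s + 2 = n)
    (h : f ⟨s, by omega⟩ < f ⟨s + 1, by omega⟩) : BlockBelow f s (s + 1) := by
  intro i j hsi hit htj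
  rwa [show i = ⟨s, by omega⟩ from Fin.ext (show (i : ℕ) = s by omega),
    show j = ⟨s + 1, by omega⟩ from Fin.ext (show (j : ℕ) = s + 1 by omega)]

theorem BlockBelow.extend (hf : Injective f) (hp : ¬ HasPattern3142 f) {s t₀ : ℕ}
    (hB : BlockBelow f (s + 1) t₀) (hst₀ : s + 1 < t₀) (ht₀ : t₀ < n) :
    ∃ t, s < t ∧ t < n ∧ (BlockBelow f s t ∨ BlockBelow (toDual ∘ f) s t) := by
  set p : Fin n := ⟨s, by omega⟩
  have hne : ∀ j : Fin n, s < j → f j ≠ f p := fun j hj h => by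
    have := congrArg Fin.val (hf h); simp [p] at this; omega
  by_cases hU : ∃ q : Fin n, t₀ ≤ (q : ℕ) ∧ f p < f q
  · obtain ⟨t, ⟨ht₀t, hpt⟩, hmin⟩ :=
      wellFounded_lt.has_min {q : Fin n | t₀ ≤ (q : ℕ) ∧ f p < f q} hU
    -- otherwise the positions `s < s + 1 < t < j` would carry the pattern 3142
    have habove : ∀ j : Fin n, t ≤ j → f p < f j := by
      intro j htj
      by_contra hjp
      rcases htj.eq_or_lt with rfl | htj
      · exact hjp hpt
      exact hp ⟨p, ⟨s + 1, by omega⟩, t, j, Fin.lt_def.2 (by simp [p]),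
        Fin.lt_def.2 (by simp; omega), htj, hB _ _ le_rfl (by simp; omega) (by omega),
        (not_lt.1 hjp).lt_of_ne (hne j (by omega)), hpt⟩
    refine ⟨t, by omega, t.2, Or.inl fun i j hsi hit htj => ?_⟩
    have hpj := habove j (Fin.le_def.2 htj)
    rcases hsi.eq_or_lt with hsi | hsi
    · obtain rfl : i = p := Fin.ext hsi.symm
      exact hpj
    by_cases hit₀ : (i : ℕ) < t₀
    · exact hB i j hsi hit₀ (by omega)
    · have hip : f i ≤ f p := not_lt.1 fun h => hmin i ⟨by omega, h⟩ (Fin.lt_def.2 hit)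
      exact (hip.lt_of_ne (hne i hsi)).trans hpj
  · push Not at hU
    have hbelow : ∀ q : Fin n, t₀ ≤ (q : ℕ) → f q < f p := fun q hq =>
      (hU q hq).lt_of_ne (hne q (by omega))
    refine ⟨s + 1, by omega, by omega, Or.inr fun i j hsi his hj => ?_⟩
    obtain rfl : i = p := Fin.ext (by simp [p]; omega)
    show f j < f p
    by_cases hjt₀ : (j : ℕ) < t₀
    · exact (hB j ⟨t₀, ht₀⟩ hj hjt₀ le_rfl).trans (hbelow _ le_rfl)
    · exact hbelow j (by omega)

theorem exists_blockBelow_or_dual (hf : Injective f) (hp : ¬ HasPattern3142 f)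
    (hp' : ¬ HasPattern3142 (toDual ∘ f)) (s : ℕ) (hs : s + 2 ≤ n) :
    ∃ t, s < t ∧ t < n ∧ (BlockBelow f s t ∨ BlockBelow (toDual ∘ f) s t) := by
  rcases hs.eq_or_lt with hs | hs
  · rcases (hf.ne (a₁ := ⟨s, by omega⟩) (a₂ := ⟨s + 1, by omega⟩) (by simp)).lt_or_gt with h | h
    · exact ⟨s + 1, by omega, by omega, Or.inl (blockBelow_penultimate hs h)⟩
    · exact ⟨s + 1, by omega, by omega, Or.inr (blockBelow_penultimate (f := toDual ∘ f) hs h)⟩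
  obtain ⟨t₀, hst₀, ht₀, hB | hB⟩ := exists_blockBelow_or_dual hf hp hp' (s + 1) hs
  · exact hB.extend hf hp hst₀ ht₀
  · obtain ⟨t, hst, htn, h | h⟩ := hB.extend (toDual.injective.comp hf) hp' hst₀ ht₀
    exacts [⟨t, hst, htn, Or.inr h⟩, ⟨t, hst, htn, Or.inl h⟩]
termination_by n - s

end Blocks

theorem IsSeparable.not_hasPattern3142_toDual {n : ℕ} {π : Equiv.Perm (Fin n)}
    (hsep : IsSeparable π) : ¬ HasPattern3142 (toDual ∘ π) :=
  fun ⟨i, j, k, h, hij, hjk, hkh, h₁, h₂, h₃⟩ => hsep.2 ⟨i, j, k, h, hij, hjk, hkh, h₃, h₂, h₁⟩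

section Prefix

variable {n : ℕ} {π : Equiv.Perm (Fin n)} {t : ℕ}

def prefixLetters (π : Equiv.Perm (Fin n)) (t : ℕ) : Finset (Fin n) :=
  Finset.univ.filter fun x => ((π⁻¹ x : Fin n) : ℕ) < t

theorem mem_prefixLetters {x : Fin n} : x ∈ prefixLetters π t ↔ ((π⁻¹ x : Fin n) : ℕ) < t := by
  simp [prefixLetters]

theorem apply_mem_prefixLetters {i : Fin n} : π i ∈ prefixLetters π t ↔ (i : ℕ) < t := by
  simp [mem_prefixLetters]

theorem mem_prefixLetters_of_invLe {x y : Fin n} (h : invLe π x y)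
    (hy : y ∈ prefixLetters π t) : x ∈ prefixLetters π t :=
  mem_prefixLetters.2 ((Fin.le_def.1 h.2).trans_lt (mem_prefixLetters.1 hy))

theorem invLe_of_blockBelow {x y : Fin n} (hB : BlockBelow π 0 t) (hx : x ∈ prefixLetters π t)
    (hy : y ∉ prefixLetters π t) : invLe π x y := by
  rw [mem_prefixLetters] at hx hy
  have := hB (π⁻¹ x) (π⁻¹ y) (Nat.zero_le _) hx (by omega)
  simp only [Equiv.Perm.inv_def, Equiv.apply_symm_apply] at this
  exact ⟨this.le, Fin.le_def.2 (by omega)⟩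

theorem not_invLe_of_blockBelow_toDual {x y : Fin n} (hB : BlockBelow (toDual ∘ π) 0 t)
    (hx : x ∈ prefixLetters π t) (hy : y ∉ prefixLetters π t) : ¬ invLe π x y := by
  rw [mem_prefixLetters] at hx hy
  have : y < x := by
    simpa using hB (π⁻¹ x) (π⁻¹ y) (Nat.zero_le _) hx (by omega)
  exact fun h => h.1.not_gt this

end Prefix

/-- For separable `π ∈ S_n`, `n > 1`, the inversion poset `P_π`
decomposes as a disjoint union (no relations across the two parts) or as an ordinal
sum (every element of the first part lies below every element of the second part)
of two nonempty induced subposets on complementary subsets of the ground set. -/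
theorem inversion_poset_decomposes (n : ℕ) (hn : 1 < n) (π : Equiv.Perm (Fin n))
    (hsep : IsSeparable π) :
    ∃ S : Finset (Fin n), S.Nonempty ∧ Sᶜ.Nonempty ∧
      ((∀ x y : Fin n, invLe π x y → (x ∈ S ↔ y ∈ S)) ∨
       (∀ x y : Fin n, invLe π x y ↔
          ((x ∈ S ∧ y ∈ S ∧ invLe π x y) ∨ (x ∉ S ∧ y ∉ S ∧ invLe π x y) ∨
            (x ∈ S ∧ y ∉ S)))) := by
  obtain ⟨t, ht, htn, hsum | hskew⟩ :=
    exists_blockBelow_or_dual π.injective hsep.1 hsep.not_hasPattern3142_toDual 0 (by omega)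
  all_goals refine ⟨prefixLetters π t, ⟨π ⟨0, by omega⟩, apply_mem_prefixLetters.2 ht⟩,
    ⟨π ⟨t, htn⟩, Finset.mem_compl.2 (apply_mem_prefixLetters.not.2 (lt_irrefl t))⟩, ?_⟩
  · refine Or.inr fun x y => ⟨fun h => ?_, ?_⟩
    · by_cases hx : x ∈ prefixLetters π t <;> by_cases hy : y ∈ prefixLetters π t
      exacts [Or.inl ⟨hx, hy, h⟩, Or.inr (Or.inr ⟨hx, hy⟩),
        absurd (mem_prefixLetters_of_invLe h hy) hx, Or.inr (Or.inl ⟨hx, hy, h⟩)]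
    · rintro (⟨-, -, h⟩ | ⟨-, -, h⟩ | ⟨hx, hy⟩)
      exacts [h, h, invLe_of_blockBelow hsum hx hy]
  · exact Or.inl fun x y h =>
      ⟨fun hx => by_contra fun hy => not_invLe_of_blockBelow_toDual hskew hx hy h,
        mem_prefixLetters_of_invLe h⟩

end SepPerm
end

section
/- Let P be a poset on {1,…,m} and Q a poset on {m+1,…,m+n}. Then F(L(P + Q), q) = F(L(P), q) · F(L(Q), q) · [m+n choose m]_q, where P + Q is the disjoint union, a poset on {1,…,m+n}, F(L(Q), q) is computed by identifying Q with a poset on {1,…,n} via subtracting m from each element, and [m+n choose m]_q = [m+n]!/([m]![n]!) is the Gaussian binomial coefficient. -/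
/-!
Every permutation `σ` of `{1,…,m+n}` factors uniquely as `σ = (a ⊕ b) u` with `a`, `b`
permutations of the two blocks and `u` a shuffle (the letters of each block appear in
increasing order); `u` is obtained by stably sorting the block labels of the word of `σ`.
Inversions add up, `ℓ(σ) = ℓ(a) + ℓ(b) + ℓ(u)`, and `σ` is a linear extension of `P + Q` iff
`a ∈ 𝓛(P)` and `b ∈ 𝓛(Q)`, so `F(𝓛(P + Q)) = F(𝓛(P)) F(𝓛(Q)) S_{m,n}` with `S_{m,n}` the
inversion generating function of shuffles. For antichains this reads
`F(S_{m+n}) = F(S_m) F(S_n) S_{m,n}`; the case `n = 1`, where `S_{N,1} = [N+1]`, gives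
`F(S_N) = [N]!` by induction, so `S_{m,n}` is the Gaussian binomial coefficient.
-/

open Polynomial

namespace SepPerm

/-- The disjoint union `P + Q` on `{1,…,m+n}` of a poset `P` on `{1,…,m}` and a poset
`Q` on `{m+1,…,m+n}` (the latter given, after subtracting `m`, as an order on `Fin n`). -/
def dsum (m n : ℕ) (rP : Fin m → Fin m → Prop) (rQ : Fin n → Fin n → Prop) :
    Fin (m + n) → Fin (m + n) → Prop := fun x y =>
  (∃ (hx : (x : ℕ) < m) (hy : (y : ℕ) < m), rP ⟨x, hx⟩ ⟨y, hy⟩) ∨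
  (∃ (_ : m ≤ (x : ℕ)) (_ : m ≤ (y : ℕ)),
      rQ ⟨(x : ℕ) - m, by have := x.2; omega⟩ ⟨(y : ℕ) - m, by have := y.2; omega⟩)

section Shuffle

variable {N : ℕ}

def isUpper (m : ℕ) (x : Fin N) : Bool := decide (m ≤ (x : ℕ))

lemma monotone_isUpper (m : ℕ) : Monotone (isUpper (N := N) m) := by
  intro x y hxy
  simp only [isUpper, Bool.le_iff_imp, decide_eq_true_eq]
  exact fun h => h.trans hxy

lemma isUpper_eq_decide_eq_last (x : Fin (N + 1)) :
    isUpper N x = decide (x = Fin.last N) := by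
  simp [isUpper, Fin.ext_iff]
  omega

def IsShuffle (m : ℕ) (u : Equiv.Perm (Fin N)) : Prop :=
  ∀ x y, x < y → isUpper m x = isUpper m y → u.symm x < u.symm y

lemma isShuffle_iff_symm_eq_sort {m : ℕ} {u : Equiv.Perm (Fin N)} :
    IsShuffle m u ↔ u.symm = Tuple.sort (isUpper m ∘ u) := by
  simp [Tuple.eq_sort_iff, Function.comp_def, monotone_isUpper, IsShuffle]

lemma IsShuffle.ext {m : ℕ} {u v : Equiv.Perm (Fin N)} (hu : IsShuffle m u) (hv : IsShuffle m v)
    (h : isUpper m ∘ u = isUpper m ∘ v) : u = v := by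
  rw [isShuffle_iff_symm_eq_sort] at hu hv
  rw [← u.symm_symm, hu, h, ← hv, v.symm_symm]

def shufflePart (m : ℕ) (σ : Equiv.Perm (Fin N)) : Equiv.Perm (Fin N) :=
  (Tuple.sort (isUpper m ∘ σ)).symm

lemma isUpper_comp_shufflePart (m : ℕ) (σ : Equiv.Perm (Fin N)) :
    isUpper m ∘ shufflePart m σ = isUpper m ∘ σ := by
  have h := Tuple.comp_perm_comp_sort_eq_comp_sort (f := isUpper m) (σ := σ)
  rw [Tuple.sort_eq_refl_iff_monotone.2 (monotone_isUpper m)] at h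
  ext x
  simpa [shufflePart] using (congrFun h ((Tuple.sort (isUpper m ∘ σ)).symm x)).symm

lemma isShuffle_shufflePart (m : ℕ) (σ : Equiv.Perm (Fin N)) :
    IsShuffle m (shufflePart m σ) := by
  rw [isShuffle_iff_symm_eq_sort, isUpper_comp_shufflePart, shufflePart, Equiv.symm_symm]

end Shuffle

section BlockDiag

variable {m n : ℕ}

def blockDiag (a : Equiv.Perm (Fin m)) (b : Equiv.Perm (Fin n)) : Equiv.Perm (Fin (m + n)) :=
  finSumFinEquiv.permCongr (a.sumCongr b)

@[simp] lemma blockDiag_castAdd (a : Equiv.Perm (Fin m)) (b : Equiv.Perm (Fin n)) (i : Fin m) :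
    blockDiag a b (Fin.castAdd n i) = Fin.castAdd n (a i) := by
  simp [blockDiag, Equiv.permCongr_apply]

@[simp] lemma blockDiag_natAdd (a : Equiv.Perm (Fin m)) (b : Equiv.Perm (Fin n)) (j : Fin n) :
    blockDiag a b (Fin.natAdd m j) = Fin.natAdd m (b j) := by
  simp [blockDiag, Equiv.permCongr_apply]

@[simp] lemma blockDiag_one : blockDiag (1 : Equiv.Perm (Fin m)) (1 : Equiv.Perm (Fin n)) = 1 := by
  ext x; simp [blockDiag, Equiv.permCongr_apply]

@[simp] lemma blockDiag_symm (a : Equiv.Perm (Fin m)) (b : Equiv.Perm (Fin n)) :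
    (blockDiag a b).symm = blockDiag a.symm b.symm := by
  refine Equiv.ext fun x => ?_
  rw [Equiv.symm_apply_eq]
  induction x using Fin.addCases <;> simp

lemma blockDiag_injective :
    Function.Injective fun p : Equiv.Perm (Fin m) × Equiv.Perm (Fin n) => blockDiag p.1 p.2 :=
  finSumFinEquiv.permCongr.injective.comp Equiv.Perm.sumCongrHom_injective

lemma castAdd_lt_natAdd (i : Fin m) (j : Fin n) : Fin.castAdd n i < Fin.natAdd m j :=
  Fin.lt_def.2 (by simp only [Fin.val_castAdd, Fin.val_natAdd]; omega)

@[simp] lemma isUpper_castAdd (i : Fin m) : isUpper m (Fin.castAdd n i) = false := by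
  simp [isUpper]

@[simp] lemma isUpper_natAdd (j : Fin n) : isUpper m (Fin.natAdd m j) = true := by
  simp [isUpper]

@[simp] lemma isUpper_blockDiag (a : Equiv.Perm (Fin m)) (b : Equiv.Perm (Fin n))
    (x : Fin (m + n)) : isUpper m (blockDiag a b x) = isUpper m x := by
  induction x using Fin.addCases <;> simp

lemma exists_blockDiag_eq {τ : Equiv.Perm (Fin (m + n))}
    (hτ : ∀ x, isUpper m (τ x) = isUpper m x) : ∃ a b, blockDiag a b = τ := by
  have hmaps : Set.MapsTo (finSumFinEquiv.symm.permCongr τ) (Set.range Sum.inl)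
      (Set.range Sum.inl) := by
    rintro _ ⟨i, rfl⟩
    have h := hτ (Fin.castAdd n i)
    simp only [Equiv.permCongr_apply, Equiv.symm_symm, finSumFinEquiv_apply_left]
    revert h
    induction τ (Fin.castAdd n i) using Fin.addCases <;> simp
  obtain ⟨⟨a, b⟩, hab⟩ := Equiv.Perm.mem_sumCongrHom_range_of_perm_mapsTo_inl hmaps
  refine ⟨a, b, ?_⟩
  rw [Equiv.Perm.sumCongrHom_apply] at hab
  rw [blockDiag, hab, ← Equiv.permCongr_symm, Equiv.apply_symm_apply]

end BlockDiag

section Decomposition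

variable {m n : ℕ}

lemma IsShuffle.symm_castAdd_lt_iff {u : Equiv.Perm (Fin (m + n))} (hu : IsShuffle m u)
    {i j : Fin m} : u.symm (Fin.castAdd n i) < u.symm (Fin.castAdd n j) ↔ i < j :=
  StrictMono.lt_iff_lt (f := fun i => u.symm (Fin.castAdd n i))
    fun _ _ h => hu _ _ (Fin.strictMono_castAdd n h) (by simp)

lemma IsShuffle.symm_natAdd_lt_iff {u : Equiv.Perm (Fin (m + n))} (hu : IsShuffle m u)
    {i j : Fin n} : u.symm (Fin.natAdd m i) < u.symm (Fin.natAdd m j) ↔ i < j :=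
  StrictMono.lt_iff_lt (f := fun i => u.symm (Fin.natAdd m i))
    fun _ _ h => hu _ _ (Fin.strictMono_natAdd m h) (by simp)

lemma blockDiag_mul_inj {a a' : Equiv.Perm (Fin m)} {b b' : Equiv.Perm (Fin n)}
    {u u' : Equiv.Perm (Fin (m + n))} (hu : IsShuffle m u) (hu' : IsShuffle m u')
    (h : blockDiag a b * u = blockDiag a' b' * u') : a = a' ∧ b = b' ∧ u = u' := by
  obtain rfl : u = u' := hu.ext hu' <| funext fun x => by
    simpa using congrArg (isUpper m) (Equiv.congr_fun h x)
  have hab := @blockDiag_injective m n (a, b) (a', b') (mul_right_cancel h)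
  simp_all

lemma exists_blockDiag_mul_shufflePart (σ : Equiv.Perm (Fin (m + n))) :
    ∃ a b, blockDiag a b * shufflePart m σ = σ := by
  obtain ⟨a, b, hab⟩ := exists_blockDiag_eq (τ := σ * (shufflePart m σ)⁻¹) fun x => by
    simpa using (congrFun (isUpper_comp_shufflePart m σ) ((shufflePart m σ).symm x)).symm
  exact ⟨a, b, by rw [hab, inv_mul_cancel_right]⟩

end Decomposition

section Inversions

variable {N m n : ℕ}

lemma invCount_eq_sum (π : Equiv.Perm (Fin N)) :
    invCount π = ∑ p, ∑ q, if p < q ∧ π q < π p then 1 else 0 := by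
  rw [invCount, Finset.card_filter, Fintype.sum_prod_type]

lemma invCount_one : invCount (1 : Equiv.Perm (Fin N)) = 0 := by
  rw [invCount, Finset.card_eq_zero, Finset.filter_eq_empty_iff]
  exact fun _ _ h => lt_asymm h.1 h.2

lemma invCount_mul (τ u : Equiv.Perm (Fin N)) :
    invCount (τ * u) = ∑ x, ∑ y, if u.symm x < u.symm y ∧ τ y < τ x then 1 else 0 := by
  rw [invCount_eq_sum, ← Equiv.sum_comp u.symm]
  refine Finset.sum_congr rfl fun x _ => ?_
  rw [← Equiv.sum_comp u.symm]
  simp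

lemma invCount_blockDiag_mul_eq_add_crossings (a : Equiv.Perm (Fin m))
    (b : Equiv.Perm (Fin n)) {u : Equiv.Perm (Fin (m + n))} (hu : IsShuffle m u) :
    invCount (blockDiag a b * u) = invCount a + invCount b +
      ∑ j : Fin n, ∑ i : Fin m,
        if u.symm (Fin.natAdd m j) < u.symm (Fin.castAdd n i) then 1 else 0 := by
  rw [invCount_mul, invCount_eq_sum a, invCount_eq_sum b]
  simp only [Fin.sum_univ_add, blockDiag_castAdd, blockDiag_natAdd,
    hu.symm_castAdd_lt_iff, hu.symm_natAdd_lt_iff,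
    (Fin.strictMono_castAdd n).lt_iff_lt, (Fin.strictMono_natAdd m).lt_iff_lt,
    castAdd_lt_natAdd, (castAdd_lt_natAdd _ _).not_gt, and_true, and_false, if_false,
    Finset.sum_const_zero, add_zero]
  rw [Finset.sum_add_distrib]
  ring

lemma IsShuffle.invCount_eq_crossings {u : Equiv.Perm (Fin (m + n))} (hu : IsShuffle m u) :
    invCount u = ∑ j : Fin n, ∑ i : Fin m,
      if u.symm (Fin.natAdd m j) < u.symm (Fin.castAdd n i) then 1 else 0 := by
  simpa [invCount_one] using invCount_blockDiag_mul_eq_add_crossings 1 1 hu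

lemma invCount_blockDiag_mul (a : Equiv.Perm (Fin m)) (b : Equiv.Perm (Fin n))
    {u : Equiv.Perm (Fin (m + n))} (hu : IsShuffle m u) :
    invCount (blockDiag a b * u) = invCount a + invCount b + invCount u := by
  rw [invCount_blockDiag_mul_eq_add_crossings a b hu, hu.invCount_eq_crossings]

lemma IsShuffle.invCount_eq_sub_symm_last {u : Equiv.Perm (Fin (N + 1))} (hu : IsShuffle N u) :
    invCount u = N - u.symm (Fin.last N) := by
  have hcount : ∑ x, (if u.symm (Fin.last N) < u.symm x then 1 else 0) =
      N - u.symm (Fin.last N) := by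
    rw [Equiv.sum_comp u.symm (fun y => if u.symm (Fin.last N) < y then 1 else 0),
      Finset.sum_boole, Finset.filter_lt_eq_Ioi, Fin.card_Ioi, Nat.add_sub_cancel,
      Nat.cast_id]
  rw [Fin.sum_univ_castSucc] at hcount
  simp only [lt_self_iff_false, if_false, add_zero] at hcount
  rw [hu.invCount_eq_crossings, ← hcount, Fin.sum_univ_one]
  rfl

end Inversions

section LinearExtensions

variable {m n : ℕ} (rP : Fin m → Fin m → Prop) (rQ : Fin n → Fin n → Prop)

@[simp] lemma dsum_castAdd_castAdd (i j : Fin m) :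
    dsum m n rP rQ (Fin.castAdd n i) (Fin.castAdd n j) ↔ rP i j := by
  simp [dsum]

@[simp] lemma dsum_natAdd_natAdd (i j : Fin n) :
    dsum m n rP rQ (Fin.natAdd m i) (Fin.natAdd m j) ↔ rQ i j := by
  simp [dsum]

@[simp] lemma not_dsum_castAdd_natAdd (i : Fin m) (j : Fin n) :
    ¬ dsum m n rP rQ (Fin.castAdd n i) (Fin.natAdd m j) := by
  simp [dsum]

@[simp] lemma not_dsum_natAdd_castAdd (i : Fin n) (j : Fin m) :
    ¬ dsum m n rP rQ (Fin.natAdd m i) (Fin.castAdd n j) := by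
  simp [dsum]

lemma isLinExt_dsum_blockDiag_mul_iff (a : Equiv.Perm (Fin m)) (b : Equiv.Perm (Fin n))
    {u : Equiv.Perm (Fin (m + n))} (hu : IsShuffle m u) :
    IsLinExt (dsum m n rP rQ) (blockDiag a b * u) ↔ IsLinExt rP a ∧ IsLinExt rQ b := by
  simp [IsLinExt, Fin.forall_fin_add, Equiv.Perm.mul_def,
    hu.symm_castAdd_lt_iff, hu.symm_natAdd_lt_iff]

end LinearExtensions

open scoped Classical in
noncomputable def shuffleGF (m n : ℕ) : Polynomial ℤ :=
  ∑ u ∈ Finset.univ.filter (IsShuffle (N := m + n) m), X ^ invCount u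

theorem FLin_dsum_eq_mul_shuffleGF {m n : ℕ} (rP : Fin m → Fin m → Prop)
    (rQ : Fin n → Fin n → Prop) :
    FLin (dsum m n rP rQ) = FLin rP * FLin rQ * shuffleGF m n := by
  classical
  rw [FLin, FLin, FLin, shuffleGF, Finset.sum_mul_sum, ← Finset.sum_product',
    Finset.sum_mul_sum, ← Finset.sum_product']
  symm
  refine Finset.sum_bij (fun t _ => blockDiag t.1.1 t.1.2 * t.2) ?_ ?_ ?_ ?_
  · rintro ⟨⟨a, b⟩, u⟩ h
    simp only [Finset.mem_product, Finset.mem_filter, Finset.mem_univ, true_and] at h ⊢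
    exact (isLinExt_dsum_blockDiag_mul_iff rP rQ a b h.2).2 h.1
  · rintro ⟨⟨a, b⟩, u⟩ h ⟨⟨a', b'⟩, u'⟩ h' heq
    simp only [Finset.mem_product, Finset.mem_filter, Finset.mem_univ, true_and] at h h'
    obtain ⟨rfl, rfl, rfl⟩ := blockDiag_mul_inj h.2 h'.2 heq
    rfl
  · intro σ hσ
    obtain ⟨a, b, hab⟩ := exists_blockDiag_mul_shufflePart (m := m) σ
    have hu := isShuffle_shufflePart m σ
    refine ⟨((a, b), shufflePart m σ), ?_, hab⟩
    rw [Finset.mem_filter, ← hab, isLinExt_dsum_blockDiag_mul_iff rP rQ a b hu] at hσ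
    simpa [hu] using hσ.2
  · rintro ⟨⟨a, b⟩, u⟩ h
    simp only [Finset.mem_product, Finset.mem_filter, Finset.mem_univ, true_and] at h
    rw [invCount_blockDiag_mul a b h.2, pow_add, pow_add]

theorem shuffleGF_one (N : ℕ) : shuffleGF N 1 = qnum (N + 1) := by
  classical
  -- such a shuffle is determined by the position `p` of its single upper letter
  have hsum : shuffleGF N 1 = ∑ p : Fin (N + 1), X ^ (N - (p : ℕ)) := by
    refine Finset.sum_nbij' (fun u => u.symm (Fin.last N))
      (fun p => shufflePart N (Equiv.swap p (Fin.last N))) ?_ ?_ ?_ ?_ ?_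
    · simp
    · simp [isShuffle_shufflePart]
    · intro u hu
      refine (isShuffle_shufflePart _ _).ext (Finset.mem_filter.1 hu).2 ?_
      rw [isUpper_comp_shufflePart]
      ext x
      simp [isUpper_eq_decide_eq_last, Equiv.swap_apply_eq_iff, Equiv.eq_symm_apply]
    · intro p _
      have h := congrFun (isUpper_comp_shufflePart N (Equiv.swap p (Fin.last N))) p
      rw [Equiv.symm_apply_eq]
      simpa [isUpper_eq_decide_eq_last, eq_comm] using h
    · intro u hu
      rw [(Finset.mem_filter.1 hu).2.invCount_eq_sub_symm_last]
  rw [hsum, Fin.sum_univ_eq_sum_range (fun i => (X : Polynomial ℤ) ^ (N - i)), qnum,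
    ← Finset.sum_range_reflect (fun i => (X : Polynomial ℤ) ^ i), Nat.add_sub_cancel]

noncomputable def invGF (N : ℕ) : Polynomial ℤ :=
  ∑ σ : Equiv.Perm (Fin N), X ^ invCount σ

lemma FLin_emptyRelation (N : ℕ) : FLin (emptyRelation : Fin N → Fin N → Prop) = invGF N := by
  classical
  rw [FLin, invGF, Finset.filter_true_of_mem]
  intro σ _ i j h
  exact h.elim

lemma dsum_emptyRelation (m n : ℕ) :
    dsum m n emptyRelation emptyRelation = emptyRelation := by
  ext x y
  simp [dsum, emptyRelation]

lemma invGF_add (m n : ℕ) : invGF (m + n) = invGF m * invGF n * shuffleGF m n := by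
  rw [← FLin_emptyRelation, ← FLin_emptyRelation, ← FLin_emptyRelation, ← dsum_emptyRelation,
    FLin_dsum_eq_mul_shuffleGF]

lemma invGF_of_le_one {N : ℕ} (hN : N ≤ 1) : invGF N = 1 := by
  have : Subsingleton (Equiv.Perm (Fin N)) := by
    interval_cases N <;> infer_instance
  rw [invGF, Fintype.sum_subsingleton _ 1, invCount_one, pow_zero]

theorem invGF_eq_qfact (N : ℕ) : invGF N = qfact N := by
  induction N with
  | zero => rw [invGF_of_le_one zero_le_one, qfact, Finset.prod_range_zero]
  | succ N ih =>
    rw [invGF_add, ih, invGF_of_le_one le_rfl, shuffleGF_one, qfact, qfact,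
      Finset.prod_range_succ, mul_one]

theorem FLin_dsum_general (m n : ℕ) (rP : Fin m → Fin m → Prop) (rQ : Fin n → Fin n → Prop) :
    ∃ C : Polynomial ℤ, C * (qfact m * qfact n) = qfact (m + n) ∧
      FLin (dsum m n rP rQ) = FLin rP * FLin rQ * C := by
  refine ⟨shuffleGF m n, ?_, FLin_dsum_eq_mul_shuffleGF rP rQ⟩
  rw [← invGF_eq_qfact, ← invGF_eq_qfact, ← invGF_eq_qfact, invGF_add]
  ring

/-- `F(𝓛(P + Q), q) = F(𝓛(P), q) · F(𝓛(Q), q) · [m+n choose m]_q`,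
where the Gaussian binomial coefficient `C` is characterized by
`C · [m]! [n]! = [m+n]!`. -/
theorem FLin_dsum (m n : ℕ) (rP : Fin m → Fin m → Prop) (rQ : Fin n → Fin n → Prop)
    (hP : IsPartialOrder (Fin m) rP) (hQ : IsPartialOrder (Fin n) rQ) :
    ∃ C : Polynomial ℤ, C * (qfact m * qfact n) = qfact (m + n) ∧
      FLin (dsum m n rP rQ) = FLin rP * FLin rQ * C :=
  FLin_dsum_general m n rP rQ

end SepPerm
end
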